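/- arXiv:2505.20484 — 2 statements merged into one kernel-verified Lean document; each statement's English description precedes it below -/
import Mathlib

section
/- Let f : ℝ^n → ℝ ∪ {+∞} be proper, lower semicontinuous, coercive, and uniformly quasiconvex with modulus φ on a closed convex set C ⊆ dom f, and let {x^k}_{k≥0} be a HiPPA sequence for f on C with order p > 1 and parameters γ_k ∈ (γ_min, γ_max). Then the sequence {x^k} converges to the unique global minimizer x̄ of f on C, i.e., x^k → x̄ where {x̄} = argmin_{x∈C} f(x). -/
/-! Comparing the proximal step `y = x^{k+1}` with the competitor `y + l • (x̄ - y)` and using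
uniform quasiconvexity gives `l (1 - l) φ(‖y - x̄‖) ≤ c ((s + l ‖y - x̄‖)^p - s^p)` with
`s = ‖x^k - y‖` and `c = 1/(p γ_k)`; letting `l → 0⁺` yields
`φ(‖y - x̄‖) ≤ ‖y - x̄‖ s^{p-1} / γ_k`. The values of `f` decrease along the iterates, so
`∑ s_k^p < ∞` and `s_k → 0`, while coercivity keeps the iterates bounded. Hence
`φ(‖x^{k+1} - x̄‖) → 0`, which forces `x^k → x̄` since `φ` is increasing and positive away
from `0`. The minimizer exists by lower semicontinuity on a compact sublevel set and is unique
by uniform quasiconvexity at the midpoint. -/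

noncomputable section

open Set Filter

/-- `φ : [0,∞) → [0,∞]` is a modulus: increasing and vanishing only at `0`. -/
def IsModulus (φ : ℝ → EReal) : Prop :=
  (∀ ⦃s t : ℝ⦄, 0 ≤ s → s ≤ t → φ s ≤ φ t) ∧ φ 0 = 0 ∧ (∀ t : ℝ, 0 < t → 0 < φ t)

/-- `f` is uniformly quasiconvex on `C` with modulus `φ`. -/
def UnifQuasiconvexOn {E : Type*} [NormedAddCommGroup E] [NormedSpace ℝ E]
    (C : Set E) (φ : ℝ → EReal) (f : E → EReal) : Prop :=
  ∀ ⦃x⦄, x ∈ C → ∀ ⦃y⦄, y ∈ C → ∀ ⦃l : ℝ⦄, l ∈ Set.Icc (0 : ℝ) 1 →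
    f (l • x + (1 - l) • y) + ((l * (1 - l) : ℝ) : EReal) * φ ‖x - y‖ ≤ max (f x) (f y)

/-- `f(x) → +∞` as `‖x‖ → +∞`. -/
def Coercive {E : Type*} [NormedAddCommGroup E] (f : E → EReal) : Prop :=
  ∀ M : ℝ, ∃ R : ℝ, ∀ x : E, R ≤ ‖x‖ → (M : EReal) < f x

/-- The high-order proximal set `prox_{f,γ}^p(C, x) = argmin_{y ∈ C} (f(y) + (1/(pγ))‖x − y‖^p)`. -/
def HOProx {E : Type*} [NormedAddCommGroup E]
    (f : E → EReal) (C : Set E) (p γ : ℝ) (x : E) : Set E :=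
  {y | y ∈ C ∧ ∀ z ∈ C,
    f y + ((1 / (p * γ) * ‖x - y‖ ^ p : ℝ) : EReal)
      ≤ f z + ((1 / (p * γ) * ‖x - z‖ ^ p : ℝ) : EReal)}

open Topology

lemma le_of_forall_mem_Ioo_mul_le_rpow_sub {r c s d p : ℝ} (hp : 1 ≤ p)
    (h : ∀ l ∈ Ioo (0 : ℝ) 1, l * (1 - l) * r ≤ c * ((s + l * d) ^ p - s ^ p)) :
    r ≤ c * (d * p * s ^ (p - 1)) := by
  have hderiv : HasDerivAt (fun l : ℝ => (s + l * d) ^ p) (d * p * s ^ (p - 1)) 0 := by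
    simpa using (((hasDerivAt_id (0 : ℝ)).mul_const d).const_add s).rpow_const (.inr hp)
  have hslope := hderiv.tendsto_slope_zero_right.const_mul c
  have hleft : Tendsto (fun l : ℝ => (1 - l) * r) (𝓝[>] 0) (𝓝 r) := by
    have : Continuous fun l : ℝ => (1 - l) * r := by fun_prop
    simpa using this.continuousWithinAt (s := Ioi 0) (x := 0) |>.tendsto
  refine le_of_tendsto_of_tendsto hleft hslope ?_
  filter_upwards [Ioo_mem_nhdsGT (zero_lt_one' ℝ)] with l hl
  have hl0 : 0 < l := hl.1
  simp only [zero_add, zero_mul, add_zero, smul_eq_mul]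
  rw [← mul_le_mul_iff_right₀ hl0]
  calc l * ((1 - l) * r) = l * (1 - l) * r := by ring
    _ ≤ c * ((s + l * d) ^ p - s ^ p) := h l hl
    _ = l * (c * (l⁻¹ * ((s + l * d) ^ p - s ^ p))) := by field_simp

lemma tendsto_zero_of_modulus_le {ι : Type*} {L : Filter ι} {φ : ℝ → EReal}
    (hmono : ∀ ⦃s t : ℝ⦄, 0 ≤ s → s ≤ t → φ s ≤ φ t) (hpos : ∀ t : ℝ, 0 < t → 0 < φ t)
    {d b : ι → ℝ} (hd : ∀ i, 0 ≤ d i) (hb : Tendsto b L (𝓝 0)) (h : ∀ i, φ (d i) ≤ b i) :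
    Tendsto d L (𝓝 0) := by
  refine tendsto_order.2 ⟨fun a ha => .of_forall fun i => ha.trans_le (hd i), fun ε hε => ?_⟩
  obtain ⟨r, hr0, hrε⟩ := EReal.lt_iff_exists_real_btwn.1 (hpos ε hε)
  filter_upwards [(tendsto_order.1 hb).2 r (EReal.coe_pos.1 hr0)] with i hi
  by_contra! hεd
  exact (hrε.trans_le ((hmono hε.le hεd).trans (h i))).not_ge (EReal.coe_le_coe_iff.2 hi.le)

lemma tendsto_zero_of_mul_rpow_le_sub_succ {F s : ℕ → ℝ} {c p m : ℝ} (hc : 0 < c) (hp : 0 < p)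
    (hs : ∀ k, 0 ≤ s k) (hm : ∀ k, m ≤ F k) (h : ∀ k, c * s k ^ p ≤ F k - F (k + 1)) :
    Tendsto s atTop (𝓝 0) := by
  have hsum : Summable fun k => c * s k ^ p := by
    refine summable_of_sum_range_le (c := F 0 - m) (fun k => by have := hs k; positivity)
      fun N => ?_
    calc ∑ k ∈ Finset.range N, c * s k ^ p ≤ ∑ k ∈ Finset.range N, (F k - F (k + 1)) :=
          Finset.sum_le_sum fun k _ => h k
      _ = F 0 - F N := Finset.sum_range_sub' F N
      _ ≤ F 0 - m := by linarith [hm N]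
  have hsp : Tendsto (fun k => s k ^ p) atTop (𝓝 0) := by
    simpa [hc.ne'] using hsum.tendsto_atTop_zero.const_mul c⁻¹
  simpa [Real.rpow_rpow_inv (hs _) hp.ne'] using hsp.rpow_const_nhds_zero (inv_pos.2 hp)

section NormedSpace

variable {E : Type*} [NormedAddCommGroup E]

lemma Coercive.isBounded_sublevel {f : E → EReal} (hf : Coercive f) (a : ℝ) :
    Bornology.IsBounded {y | f y ≤ a} := by
  obtain ⟨R, hR⟩ := hf a
  refine (Metric.isBounded_closedBall (x := 0) (r := R)).subset fun y hy => ?_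
  rw [mem_closedBall_zero_iff]
  by_contra! h
  exact (hR y h.le).not_ge hy

lemma Coercive.exists_isMinOn [ProperSpace E] {f : E → EReal} (hf : Coercive f)
    (hlsc : LowerSemicontinuous f) {C : Set E} (hC : IsClosed C) {x₀ : E} (hx₀ : x₀ ∈ C)
    (hfx₀ : f x₀ ≠ ⊤) : ∃ xb ∈ C, IsMinOn f C xb := by
  have hK : IsCompact (C ∩ {y | f y ≤ f x₀}) :=
    Metric.isCompact_of_isClosed_isBounded (hC.inter (hlsc.isClosed_preimage _))
      ((hf.isBounded_sublevel (f x₀).toReal).subset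
        fun y hy => hy.2.trans (EReal.le_coe_toReal hfx₀))
  have hx₀K : x₀ ∈ C ∩ {y | f y ≤ f x₀} := ⟨hx₀, le_refl (f x₀)⟩
  obtain ⟨xb, hxbK, hmin⟩ := (hlsc.lowerSemicontinuousOn _).exists_isMinOn ⟨x₀, hx₀K⟩ hK
  refine ⟨xb, hxbK.1, fun y hy => ?_⟩
  by_cases hy' : f y ≤ f x₀
  · exact hmin ⟨hy, hy'⟩
  · exact (hmin hx₀K).trans (not_le.1 hy').le

namespace HOProx

variable {f : E → EReal} {C : Set E} {p γ : ℝ} {x y : E}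

lemma add_le_of_mem (hy : y ∈ HOProx f C p γ x) (hx : x ∈ C) (hp : 0 < p) :
    f y + ((1 / (p * γ) * ‖x - y‖ ^ p : ℝ) : EReal) ≤ f x := by
  simpa [Real.zero_rpow hp.ne'] using hy.2 x hx

lemma le_of_mem (hy : y ∈ HOProx f C p γ x) (hx : x ∈ C) (hp : 0 < p) (hγ : 0 ≤ γ) :
    f y ≤ f x :=
  le_add_of_nonneg_right (EReal.coe_nonneg.2 (by positivity)) |>.trans (add_le_of_mem hy hx hp)

end HOProx

lemma tendsto_norm_sub_succ_of_mem_HOProx {f : E → EReal} {C : Set E} {p γmax : ℝ}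
    {x : ℕ → E} {γ : ℕ → ℝ} (hp : 0 < p) (hγ : ∀ k, 0 < γ k) (hγmax : ∀ k, γ k ≤ γmax)
    (hxC : ∀ k, x k ∈ C) (hstep : ∀ k, x (k + 1) ∈ HOProx f C p (γ k) (x k))
    (hfin : ∀ k, f (x k) ≠ ⊤) {m : ℝ} (hm : ∀ k, m ≤ f (x k)) :
    Tendsto (fun k => ‖x k - x (k + 1)‖) atTop (𝓝 0) := by
  have hF : ∀ k, ((f (x k)).toReal : EReal) = f (x k) := fun k =>
    EReal.coe_toReal (hfin k) (ne_bot_of_le_ne_bot (EReal.coe_ne_bot m) (hm k))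
  have hγmax0 : 0 < γmax := (hγ 0).trans_le (hγmax 0)
  refine tendsto_zero_of_mul_rpow_le_sub_succ (F := fun k => (f (x k)).toReal)
    (c := 1 / (p * γmax)) (by positivity) hp (fun _ => norm_nonneg _)
    (fun k => EReal.coe_le_coe_iff.1 ((hm k).trans_eq (hF k).symm)) fun k => ?_
  have hdesc := HOProx.add_le_of_mem (hstep k) (hxC k) hp
  rw [← hF (k + 1), ← hF k, ← EReal.coe_add, EReal.coe_le_coe_iff] at hdesc
  have hc : 1 / (p * γmax) * ‖x k - x (k + 1)‖ ^ p
      ≤ 1 / (p * γ k) * ‖x k - x (k + 1)‖ ^ p := by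
    have := hγ k
    gcongr
    exact hγmax k
  linarith

variable [NormedSpace ℝ E] {C : Set E} {φ : ℝ → EReal} {f : E → EReal}

lemma UnifQuasiconvexOn.eq_of_isMinOn (hf : UnifQuasiconvexOn C φ f) (hC : Convex ℝ C)
    (hφ : ∀ t : ℝ, 0 < t → 0 < φ t) {a b : E} (ha : a ∈ C) (hb : b ∈ C)
    (hmina : IsMinOn f C a) (hminb : IsMinOn f C b) (hfb : f b ≠ ⊤) (hfb' : f b ≠ ⊥) :
    a = b := by
  by_contra hab
  have hpos : (0 : EReal) < ((1 / 2 * (1 - 1 / 2) : ℝ) : EReal) * φ ‖a - b‖ :=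
    EReal.mul_pos (by norm_num) (hφ _ (norm_pos_iff.2 (sub_ne_zero.2 hab)))
  have hmid : f b ≤ f ((1 / 2 : ℝ) • a + (1 - 1 / 2 : ℝ) • b) :=
    hminb (hC ha hb (by norm_num) (by norm_num) (by norm_num))
  have hq := hf ha hb (l := 1 / 2) (by norm_num)
  rw [max_eq_right (hmina hb)] at hq
  rw [← EReal.coe_toReal hfb hfb'] at hmid hq
  refine (EReal.addLECancellable_coe (f b).toReal ?_).not_gt hpos
  calc _ ≤ f ((1 / 2 : ℝ) • a + (1 - 1 / 2 : ℝ) • b)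
        + ((1 / 2 * (1 - 1 / 2) : ℝ) : EReal) * φ ‖a - b‖ := by gcongr
    _ ≤ _ := hq
    _ = _ := (add_zero _).symm

lemma UnifQuasiconvexOn.modulus_le_of_mem_HOProx (hf : UnifQuasiconvexOn C φ f)
    (hC : Convex ℝ C) {p γ : ℝ} (hp : 1 ≤ p) (hγ : 0 < γ) {x y xb : E}
    (hy : y ∈ HOProx f C p γ x) (hxb : xb ∈ C) (hmin : f xb ≤ f y) (hfy : f y ≠ ⊤)
    (hfy' : f y ≠ ⊥) :
    φ ‖y - xb‖ ≤ ((‖y - xb‖ * ‖x - y‖ ^ (p - 1) / γ : ℝ) : EReal) := by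
  set d := ‖y - xb‖
  set s := ‖x - y‖
  set c := 1 / (p * γ)
  have hstep : ∀ l ∈ Ioo (0 : ℝ) 1,
      ((c * s ^ p : ℝ) : EReal) + ((l * (1 - l) : ℝ) : EReal) * φ d
        ≤ ((c * (s + l * d) ^ p : ℝ) : EReal) := by
    intro l hl
    set z := l • xb + (1 - l) • y
    have hz : z ∈ C := hC hxb hy.1 hl.1.le (by linarith [hl.2]) (by ring)
    have hdist : ‖x - z‖ ≤ s + l * d := by
      calc ‖x - z‖ = ‖(x - y) - l • (xb - y)‖ := by congr 1; module
        _ ≤ ‖x - y‖ + ‖l • (xb - y)‖ := norm_sub_le _ _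
        _ = s + l * d := by rw [norm_smul, Real.norm_eq_abs, abs_of_pos hl.1, norm_sub_rev xb]
    have hq := hf hxb hy.1 (l := l) ⟨hl.1.le, hl.2.le⟩
    rw [max_eq_right hmin, norm_sub_rev xb] at hq
    refine EReal.addLECancellable_coe (f y).toReal ?_
    rw [EReal.coe_toReal hfy hfy']
    calc f y + (((c * s ^ p : ℝ) : EReal) + ((l * (1 - l) : ℝ) : EReal) * φ d)
        = (f y + ((c * s ^ p : ℝ) : EReal)) + ((l * (1 - l) : ℝ) : EReal) * φ d :=
          (add_assoc _ _ _).symm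
      _ ≤ (f z + ((c * ‖x - z‖ ^ p : ℝ) : EReal)) + ((l * (1 - l) : ℝ) : EReal) * φ d :=
          add_le_add (hy.2 z hz) le_rfl
      _ = (f z + ((l * (1 - l) : ℝ) : EReal) * φ d) + ((c * ‖x - z‖ ^ p : ℝ) : EReal) :=
          add_right_comm _ _ _
      _ ≤ f y + ((c * (s + l * d) ^ p : ℝ) : EReal) :=
          add_le_add hq (EReal.coe_le_coe_iff.2 (by gcongr))
  induction hφd : φ d using EReal.rec with
  | bot => exact bot_le
  | top =>
    have := hstep (1 / 2) ⟨by norm_num, by norm_num⟩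
    rw [hφd, EReal.coe_mul_top_of_pos (by norm_num), EReal.coe_add_top] at this
    exact absurd this (EReal.coe_lt_top _).not_ge
  | coe r =>
    have hreal : ∀ l ∈ Ioo (0 : ℝ) 1, l * (1 - l) * r ≤ c * ((s + l * d) ^ p - s ^ p) := by
      intro l hl
      have := hstep l hl
      rw [hφd, ← EReal.coe_mul, ← EReal.coe_add, EReal.coe_le_coe_iff] at this
      linarith
    have hr := le_of_forall_mem_Ioo_mul_le_rpow_sub hp hreal
    refine EReal.coe_le_coe_iff.2 (hr.trans_eq ?_)
    have : p ≠ 0 := by linarith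
    simp only [c]
    field_simp

end NormedSpace

theorem statement_13_general (n : ℕ) (f : EuclideanSpace ℝ (Fin n) → EReal)
    (hbot : ∀ x, f x ≠ ⊥)
    (hlsc : LowerSemicontinuous f) (hcoer : Coercive f)
    (C : Set (EuclideanSpace ℝ (Fin n)))
    (hCclosed : IsClosed C) (hCconv : Convex ℝ C)
    (hdom : ∀ x ∈ C, f x ≠ ⊤)
    (φ : ℝ → EReal) (hφ : IsModulus φ)
    (hquasi : UnifQuasiconvexOn C φ f)
    (p γmin γmax : ℝ) (hp : 1 < p) (hγmin : 0 < γmin)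
    (x : ℕ → EuclideanSpace ℝ (Fin n)) (γ : ℕ → ℝ)
    (hx0 : x 0 ∈ C)
    (hγk : ∀ k, γ k ∈ Set.Ioo γmin γmax)
    (hstep : ∀ k, x (k + 1) ∈ HOProx f C p (γ k) (x k)) :
    ∃ xb ∈ C, (∀ y ∈ C, f xb ≤ f y) ∧
      (∀ z ∈ C, (∀ y ∈ C, f z ≤ f y) → z = xb) ∧
      Filter.Tendsto x Filter.atTop (nhds xb) := by
  have hxC : ∀ k, x k ∈ C := fun k => Nat.casesOn k hx0 fun k => (hstep k).1
  have hγpos : ∀ k, 0 < γ k := fun k => hγmin.trans (hγk k).1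
  have hdesc : Antitone (f ∘ x) := antitone_nat_of_succ_le fun k =>
    show f (x (k + 1)) ≤ f (x k) from
      HOProx.le_of_mem (hstep k) (hxC k) (by linarith) (hγpos k).le
  obtain ⟨xb, hxbC, hxb⟩ := hcoer.exists_isMinOn hlsc hCclosed hx0 (hdom _ hx0)
  refine ⟨xb, hxbC, hxb, fun z hz hzmin => hquasi.eq_of_isMinOn hCconv hφ.2.2 hz hxbC hzmin hxb
    (hdom _ hxbC) (hbot _), ?_⟩
  have hs := tendsto_norm_sub_succ_of_mem_HOProx (by linarith) hγpos (fun k => (hγk k).2.le) hxC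
    hstep (fun k => hdom _ (hxC k)) (m := (f xb).toReal)
    (fun k => (EReal.coe_toReal (hdom _ hxbC) (hbot _)).trans_le (hxb (hxC k)))
  obtain ⟨D, hD⟩ := (Metric.isBounded_iff_subset_closedBall xb).1
    (hcoer.isBounded_sublevel (f (x 0)).toReal)
  have hkey : ∀ k,
      φ ‖x (k + 1) - xb‖ ≤ ((D * ‖x k - x (k + 1)‖ ^ (p - 1) / γmin : ℝ) : EReal) := by
    intro k
    refine (hquasi.modulus_le_of_mem_HOProx hCconv hp.le (hγpos k) (hstep k) hxbC (hxb (hxC _))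
      (hdom _ (hxC _)) (hbot _)).trans (EReal.coe_le_coe_iff.2 ?_)
    have hdD : ‖x (k + 1) - xb‖ ≤ D := by
      simpa [dist_eq_norm] using
        hD ((hdesc (Nat.zero_le (k + 1))).trans (EReal.le_coe_toReal (hdom _ hx0)))
    gcongr
    · exact mul_nonneg ((norm_nonneg _).trans hdD) (by positivity)
    · exact (hγk k).1.le
  rw [tendsto_iff_norm_sub_tendsto_zero, ← tendsto_add_atTop_iff_nat 1]
  refine tendsto_zero_of_modulus_le hφ.1 hφ.2.2 (fun _ => norm_nonneg _) ?_ hkey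
  simpa using ((hs.rpow_const_nhds_zero (sub_pos.2 hp)).const_mul D).div_const γmin

/-- **Global convergence of HiPPA.**  A HiPPA sequence converges to the
unique global minimizer `x̄` of `f` on `C`. -/
theorem statement_13 (n : ℕ) (f : EuclideanSpace ℝ (Fin n) → EReal)
    (hproper : ∃ x, f x ≠ ⊤) (hbot : ∀ x, f x ≠ ⊥)
    (hlsc : LowerSemicontinuous f) (hcoer : Coercive f)
    (C : Set (EuclideanSpace ℝ (Fin n)))
    (hCclosed : IsClosed C) (hCconv : Convex ℝ C)
    (hdom : ∀ x ∈ C, f x ≠ ⊤)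
    (φ : ℝ → EReal) (hφ : IsModulus φ)
    (hquasi : UnifQuasiconvexOn C φ f)
    (p γmin γmax : ℝ) (hp : 1 < p) (hγmin : 0 < γmin) (hγ : γmin < γmax)
    (x : ℕ → EuclideanSpace ℝ (Fin n)) (γ : ℕ → ℝ)
    (hx0 : x 0 ∈ C)
    (hγk : ∀ k, γ k ∈ Set.Ioo γmin γmax)
    (hstep : ∀ k, x (k + 1) ∈ HOProx f C p (γ k) (x k)) :
    ∃ xb ∈ C, (∀ y ∈ C, f xb ≤ f y) ∧
      (∀ z ∈ C, (∀ y ∈ C, f z ≤ f y) → z = xb) ∧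
      Filter.Tendsto x Filter.atTop (nhds xb) :=
  statement_13_general n f hbot hlsc hcoer C hCclosed hCconv hdom φ hφ hquasi p γmin γmax hp hγmin x
    γ hx0 hγk hstep
end
end

section
/- Let f : ℝ^n → ℝ ∪ {+∞} be proper, lower semicontinuous, coercive, and uniformly quasiconvex with modulus φ on a closed convex set C ⊆ dom f. Let p > 2, set σ̂_p = (1/2)^{(3p−2)/2}, and suppose φ(t) ≥ ρ_p t^p for all t ≥ 0, where ρ_p > 0. Let {x^k}_{k≥0} be a HiPPA sequence for f on C with order p and parameters γ_k ∈ (γ_min, γ_max) where γ_min > 1/ρ_p, and let x̄ be the unique global minimizer of f on C. Then the convergence is linear: for every k ≥ 0, ‖x̄ − x^{k+1}‖ ≤ ( p/(p·γ_min·ρ_p + σ̂_p) )^{1/(p−1)}·‖x̄ − x^k‖, and ( p/(p·γ_min·ρ_p + σ̂_p) )^{1/(p−1)} < 1. -/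
/-!
Let `x'` be a proximal step from `x` and `y` the minimizer of `f` on `C`. Comparing `x'` with the
points `l • y + (1 - l) • x'` of the segment towards `y`, optimality of `x'` in the proximal
problem and uniform quasiconvexity (with `f y ≤ f x'`) give, for `l ∈ (0, 1)`,
  `p γ ρ l (1 - l) ‖y - x'‖ ^ p ≤ ‖(x - x') - l • (y - x')‖ ^ p - ‖x - x'‖ ^ p`.
Bounding the right side by convexity of `t ↦ t ^ p`, dividing by `l` and letting `l → 0` gives
`‖x - x'‖ ^ p + p γ ρ ‖y - x'‖ ^ p ≤ ‖x - y‖ ^ p`; bounding it instead by the derivative of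
`t ↦ t ^ p` gives `γ ρ ‖y - x'‖ ^ (p - 1) ≤ ‖x - x'‖ ^ (p - 1)`. Eliminating `‖x - x'‖` and using
`(X + σ / p) ^ (p / (p - 1)) ≤ X ^ (p / (p - 1)) + p X`, valid for `p ≥ 2`, `X ≥ 1` and
`0 ≤ σ ≤ 1`, with `X = γ ρ` and `σ = σ̂_p` yields the contraction.
-/

noncomputable section

open Set Filter

open Topology

lemma le_of_forall_one_sub_mul_le {c b : ℝ} {g : ℝ → ℝ} (hg : Tendsto g (𝓝[>] 0) (𝓝 b))
    (h : ∀ l ∈ Ioo (0 : ℝ) 1, (1 - l) * c ≤ g l) : c ≤ b := by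
  have hc : Tendsto (fun l : ℝ => (1 - l) * c) (𝓝[>] 0) (𝓝 c) :=
    ((continuous_const.sub continuous_id).mul continuous_const).tendsto' 0 c (by simp)
      |>.mono_left nhdsWithin_le_nhds
  exact le_of_tendsto_of_tendsto hc hg (eventually_of_mem (Ioo_mem_nhdsGT one_pos) h)

lemma Real.rpow_sub_rpow_le_mul {a b p : ℝ} (ha : 0 ≤ a) (hab : a ≤ b) (hp : 1 ≤ p) :
    b ^ p - a ^ p ≤ p * b ^ (p - 1) * (b - a) := by
  rcases hab.eq_or_lt with rfl | hlt
  · simp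
  have hslope := (convexOn_rpow hp).slope_le_of_hasDerivAt ha (ha.trans hlt.le) hlt
    (Real.hasDerivAt_rpow_const (Or.inr hp))
  rwa [slope_def_field, div_le_iff₀ (sub_pos.2 hlt)] at hslope

lemma rpow_add_div_le {p X σ : ℝ} (hp : 2 ≤ p) (hX : 1 ≤ X) (hσ₀ : 0 ≤ σ) (hσ₁ : σ ≤ 1) :
    (X + σ / p) ^ (p / (p - 1)) ≤ X ^ (p / (p - 1)) + p * X := by
  have hp₁ : 0 < p - 1 := by linarith
  have hq₁ : 1 ≤ p / (p - 1) := by rw [le_div_iff₀ hp₁]; linarith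
  have hq₂ : p / (p - 1) ≤ 2 := by rw [div_le_iff₀ hp₁]; linarith
  have hε₀ : 0 ≤ σ / p := by positivity
  have hε₁ : σ / p ≤ 1 / 2 := by rw [div_le_iff₀ (by linarith)]; linarith
  have hmv :=
    Real.rpow_sub_rpow_le_mul (by linarith) (le_add_of_nonneg_right hε₀ : X ≤ X + σ / p) hq₁
  rw [add_sub_cancel_left] at hmv
  have hpow : (X + σ / p) ^ (p / (p - 1) - 1) ≤ X + σ / p := by
    simpa using Real.rpow_le_rpow_of_exponent_le (by linarith) (by linarith : p / (p - 1) - 1 ≤ 1)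
  have hslope :
      p / (p - 1) * (X + σ / p) ^ (p / (p - 1) - 1) * (σ / p) ≤ 2 * (2 * X) * (1 / 2) := by
    gcongr; linarith
  nlinarith

lemma le_rpow_mul_of_rpow_add_le {p X σ a d D : ℝ} (hp : 2 ≤ p) (hX : 1 ≤ X) (hσ₀ : 0 ≤ σ)
    (hσ₁ : σ ≤ 1) (ha : 0 ≤ a) (hd : 0 ≤ d) (hD : 0 ≤ D)
    (hsum : a ^ p + p * X * d ^ p ≤ D ^ p) (hratio : X * d ^ (p - 1) ≤ a ^ (p - 1)) :
    d ≤ (p / (p * X + σ)) ^ (1 / (p - 1)) * D := by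
  have hp₀ : 0 < p := by linarith
  have hp₁ : 0 < p - 1 := by linarith
  set Y := X + σ / p
  have hY : 0 < Y := by positivity
  have hpq : (p - 1) * (p / (p - 1)) = p := by field_simp
  have ha_pow : X ^ (p / (p - 1)) * d ^ p ≤ a ^ p := by
    have := Real.rpow_le_rpow (by positivity) hratio (by positivity : 0 ≤ p / (p - 1))
    rwa [Real.mul_rpow (by positivity) (by positivity), ← Real.rpow_mul hd, ← Real.rpow_mul ha,
      hpq] at this
  have hY_pow : (Y ^ (1 / (p - 1)) * d) ^ p ≤ D ^ p := by
    rw [Real.mul_rpow (by positivity) hd, ← Real.rpow_mul hY.le, one_div_mul_eq_div]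
    nlinarith [rpow_add_div_le hp hX hσ₀ hσ₁, Real.rpow_nonneg hd p]
  have hY_le : Y ^ (1 / (p - 1)) * d ≤ D := (Real.rpow_le_rpow_iff (by positivity) hD hp₀).1 hY_pow
  rwa [show p / (p * X + σ) = Y⁻¹ by simp only [Y]; field_simp, Real.inv_rpow hY.le,
    le_inv_mul_iff₀ (by positivity)]

lemma rpow_one_div_sub_one_lt_one {p X σ : ℝ} (hp : 1 < p) (hX : 1 ≤ X) (hσ : 0 < σ) :
    (p / (p * X + σ)) ^ (1 / (p - 1)) < 1 := by
  have hp₀ : 0 < p := by linarith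
  refine Real.rpow_lt_one (by positivity) ?_ (by simpa using hp)
  rw [div_lt_one (by positivity)]
  nlinarith

section Growth

variable {E : Type*} [NormedAddCommGroup E] [NormedSpace ℝ E] {u v : E} {p c : ℝ}

lemma rpow_norm_add_le_of_growth (hp : 1 ≤ p)
    (hgrowth : ∀ l ∈ Ioo (0 : ℝ) 1, p * c * (l * (1 - l)) * ‖v‖ ^ p ≤ ‖u - l • v‖ ^ p - ‖u‖ ^ p) :
    ‖u‖ ^ p + p * c * ‖v‖ ^ p ≤ ‖u - v‖ ^ p := by
  suffices p * c * ‖v‖ ^ p ≤ ‖u - v‖ ^ p - ‖u‖ ^ p by linarith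
  refine le_of_forall_one_sub_mul_le tendsto_const_nhds fun l ⟨hl₀, hl₁⟩ => ?_
  have hnorm : ‖u - l • v‖ ≤ (1 - l) * ‖u‖ + l * ‖u - v‖ := by
    calc ‖u - l • v‖ = ‖(1 - l) • u + l • (u - v)‖ := by congr 1; module
      _ ≤ (1 - l) * ‖u‖ + l * ‖u - v‖ := by
        refine (norm_add_le _ _).trans_eq ?_
        rw [norm_smul, norm_smul, Real.norm_of_nonneg (by linarith), Real.norm_of_nonneg hl₀.le]
  have hconv : ((1 - l) * ‖u‖ + l * ‖u - v‖) ^ p ≤ (1 - l) * ‖u‖ ^ p + l * ‖u - v‖ ^ p :=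
    (convexOn_rpow hp).2 (norm_nonneg u) (norm_nonneg (u - v)) (by linarith) hl₀.le (by ring)
  have hpow := (Real.rpow_le_rpow (norm_nonneg _) hnorm (by linarith)).trans hconv
  have hl := hgrowth l ⟨hl₀, hl₁⟩
  nlinarith

lemma mul_rpow_norm_le_of_growth (hp : 1 ≤ p) (hv : v ≠ 0)
    (hgrowth : ∀ l ∈ Ioo (0 : ℝ) 1, p * c * (l * (1 - l)) * ‖v‖ ^ p ≤ ‖u - l • v‖ ^ p - ‖u‖ ^ p) :
    c * ‖v‖ ^ (p - 1) ≤ ‖u‖ ^ (p - 1) := by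
  have hv₀ : 0 < ‖v‖ := norm_pos_iff.2 hv
  have hcont : Tendsto (fun l : ℝ => (‖u‖ + l * ‖v‖) ^ (p - 1)) (𝓝[>] 0) (𝓝 (‖u‖ ^ (p - 1))) :=
    ((Real.continuous_rpow_const (by linarith)).comp (by fun_prop)).tendsto' 0 _ (by simp)
      |>.mono_left nhdsWithin_le_nhds
  refine le_of_forall_one_sub_mul_le hcont fun l ⟨hl₀, hl₁⟩ => ?_
  have hnorm : ‖u - l • v‖ ≤ ‖u‖ + l * ‖v‖ := by
    simpa [norm_smul, Real.norm_of_nonneg hl₀.le] using norm_sub_le u (l • v)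
  have hmv := Real.rpow_sub_rpow_le_mul (norm_nonneg u)
    (le_add_of_nonneg_right (by positivity) : ‖u‖ ≤ ‖u‖ + l * ‖v‖) hp
  rw [add_sub_cancel_left] at hmv
  have hpow : ‖u - l • v‖ ^ p ≤ (‖u‖ + l * ‖v‖) ^ p :=
    Real.rpow_le_rpow (norm_nonneg _) hnorm (by linarith)
  have hl := hgrowth l ⟨hl₀, hl₁⟩
  have hvp : ‖v‖ ^ p = ‖v‖ ^ (p - 1) * ‖v‖ := by
    rw [← Real.rpow_add_one hv₀.ne', sub_add_cancel]
  rw [hvp] at hl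
  refine le_of_mul_le_mul_left ?_ (by positivity : 0 < p * l * ‖v‖)
  nlinarith

end Growth

section HOProx

variable {E : Type*} [NormedAddCommGroup E] [NormedSpace ℝ E] {f : E → EReal} {C : Set E}
  {φ : ℝ → EReal} {p γ ρ : ℝ} {x x' y : E}

lemma HOProx.growth_along_segment (hC : Convex ℝ C) (hquasi : UnifQuasiconvexOn C φ f)
    (htop : ∀ z ∈ C, f z ≠ ⊤) (hbot : ∀ z ∈ C, f z ≠ ⊥) (hpγ : 0 < p * γ)
    (hx' : x' ∈ HOProx f C p γ x) (hy : y ∈ C) (hmin : f y ≤ f x')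
    (hφ : ((ρ * ‖y - x'‖ ^ p : ℝ) : EReal) ≤ φ ‖y - x'‖) {l : ℝ} (hl : l ∈ Icc (0 : ℝ) 1) :
    p * (γ * ρ) * (l * (1 - l)) * ‖y - x'‖ ^ p
      ≤ ‖(x - x') - l • (y - x')‖ ^ p - ‖x - x'‖ ^ p := by
  obtain ⟨hx'C, hopt⟩ := hx'
  set w := l • y + (1 - l) • x'
  have hwC : w ∈ C := hC hy hx'C hl.1 (sub_nonneg.2 hl.2) (by ring)
  have hdecrease : f w + ((l * (1 - l) * (ρ * ‖y - x'‖ ^ p) : ℝ) : EReal) ≤ f x' :=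
    calc f w + ((l * (1 - l) * (ρ * ‖y - x'‖ ^ p) : ℝ) : EReal)
        = f w + ((l * (1 - l) : ℝ) : EReal) * ((ρ * ‖y - x'‖ ^ p : ℝ) : EReal) := by
          rw [EReal.coe_mul]
      _ ≤ f w + ((l * (1 - l) : ℝ) : EReal) * φ ‖y - x'‖ := by
          gcongr
          exact EReal.coe_nonneg.2 (mul_nonneg hl.1 (sub_nonneg.2 hl.2))
      _ ≤ max (f y) (f x') := hquasi hy hx'C hl
      _ = f x' := max_eq_right hmin
  have hoptw := hopt w hwC
  obtain ⟨F', hF'⟩ : ∃ r : ℝ, f x' = r := ⟨_, (EReal.coe_toReal (htop _ hx'C) (hbot _ hx'C)).symm⟩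
  obtain ⟨Fw, hFw⟩ : ∃ r : ℝ, f w = r := ⟨_, (EReal.coe_toReal (htop _ hwC) (hbot _ hwC)).symm⟩
  rw [hF', hFw] at hdecrease hoptw
  norm_cast at hdecrease hoptw
  rw [show x - w = (x - x') - l • (y - x') by simp only [w]; module] at hoptw
  have key : l * (1 - l) * (ρ * ‖y - x'‖ ^ p)
      ≤ 1 / (p * γ) * (‖(x - x') - l • (y - x')‖ ^ p - ‖x - x'‖ ^ p) := by
    rw [mul_sub]; linarith
  rw [one_div_mul_eq_div, le_div_iff₀ hpγ] at key
  linarith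

theorem HOProx.norm_minimizer_sub_le {X σ : ℝ} (hC : Convex ℝ C)
    (hquasi : UnifQuasiconvexOn C φ f) (htop : ∀ z ∈ C, f z ≠ ⊤) (hbot : ∀ z ∈ C, f z ≠ ⊥)
    (hp : 2 ≤ p) (hγ : 0 < γ) (hX : 1 ≤ X) (hXγ : X ≤ γ * ρ) (hσ₀ : 0 ≤ σ) (hσ₁ : σ ≤ 1)
    (hx' : x' ∈ HOProx f C p γ x) (hy : y ∈ C) (hmin : f y ≤ f x')
    (hφ : ((ρ * ‖y - x'‖ ^ p : ℝ) : EReal) ≤ φ ‖y - x'‖) :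
    ‖y - x'‖ ≤ (p / (p * X + σ)) ^ (1 / (p - 1)) * ‖y - x‖ := by
  have hp₀ : 0 < p := by linarith
  have hgrowth : ∀ l ∈ Ioo (0 : ℝ) 1, p * X * (l * (1 - l)) * ‖y - x'‖ ^ p
      ≤ ‖(x - x') - l • (y - x')‖ ^ p - ‖x - x'‖ ^ p := fun l ⟨hl₀, hl₁⟩ =>
    le_trans (by gcongr) <| HOProx.growth_along_segment hC hquasi htop hbot (by positivity) hx' hy
      hmin hφ ⟨hl₀.le, hl₁.le⟩
  rcases eq_or_ne (y - x') 0 with hv | hv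
  · rw [hv, norm_zero]
    positivity
  have hsum := rpow_norm_add_le_of_growth (by linarith) hgrowth
  rw [sub_sub_sub_cancel_right, norm_sub_rev x y] at hsum
  exact le_rpow_mul_of_rpow_add_le hp hX hσ₀ hσ₁ (norm_nonneg _) (norm_nonneg _) (norm_nonneg _)
    hsum (mul_rpow_norm_le_of_growth (by linarith) hv hgrowth)

end HOProx

theorem statement_18_general (n : ℕ) (f : EuclideanSpace ℝ (Fin n) → EReal)
    (hbot : ∀ x, f x ≠ ⊥)
    (C : Set (EuclideanSpace ℝ (Fin n)))
    (hCconv : Convex ℝ C)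
    (hdom : ∀ x ∈ C, f x ≠ ⊤)
    (φ : ℝ → EReal)
    (hquasi : UnifQuasiconvexOn C φ f)
    (p : ℝ) (hp : 2 < p)
    (ρp : ℝ) (hρp : 0 < ρp)
    (hlb : ∀ t : ℝ, 0 ≤ t → ((ρp * t ^ p : ℝ) : EReal) ≤ φ t)
    (γmin γmax : ℝ) (hγmin : 1 / ρp < γmin)
    (x : ℕ → EuclideanSpace ℝ (Fin n)) (γ : ℕ → ℝ)
    (hx0 : x 0 ∈ C)
    (hγk : ∀ k, γ k ∈ Set.Ioo γmin γmax)
    (hstep : ∀ k, x (k + 1) ∈ HOProx f C p (γ k) (x k))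
    (xb : EuclideanSpace ℝ (Fin n)) (hxbC : xb ∈ C)
    (hxbmin : ∀ y ∈ C, f xb ≤ f y) :
    ((p / (p * γmin * ρp + ((1 : ℝ) / 2) ^ ((3 * p - 2) / 2))) ^ (1 / (p - 1)) < 1) ∧
    ∀ k : ℕ, ‖xb - x (k + 1)‖
      ≤ (p / (p * γmin * ρp + ((1 : ℝ) / 2) ^ ((3 * p - 2) / 2))) ^ (1 / (p - 1))
          * ‖xb - x k‖ := by
  have hX : 1 < γmin * ρp := by rwa [div_lt_iff₀ hρp] at hγmin
  have hγmin₀ : 0 < γmin := pos_of_mul_pos_left (by linarith) hρp.le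
  have hσ₀ : 0 < ((1 : ℝ) / 2) ^ ((3 * p - 2) / 2) := by positivity
  have hσ₁ : ((1 : ℝ) / 2) ^ ((3 * p - 2) / 2) ≤ 1 :=
    Real.rpow_le_one (by norm_num) (by norm_num) (by linarith)
  have hxC : ∀ k, x k ∈ C := fun k => Nat.recOn k hx0 fun k _ => (hstep k).1
  simp only [mul_assoc p γmin ρp]
  refine ⟨rpow_one_div_sub_one_lt_one (by linarith) hX.le hσ₀, fun k => ?_⟩
  exact HOProx.norm_minimizer_sub_le hCconv hquasi hdom (fun y _ => hbot y) hp.le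
    (hγmin₀.trans (hγk k).1) hX.le (by nlinarith [(hγk k).1]) hσ₀.le hσ₁ (hstep k) hxbC
    (hxbmin _ (hxC _)) (hlb _ (norm_nonneg _))

/-- **Linear convergence for `p > 2`.**  Let `p > 2`,
`σ̂_p = (1/2)^((3p−2)/2)`, and suppose `φ(t) ≥ ρ_p t^p` for all `t ≥ 0` with `ρ_p > 0`.
For a HiPPA sequence of order `p` with `γ_min > 1/ρ_p` and the unique global minimizer
`x̄`: `‖x̄ − x^{k+1}‖ ≤ (p/(p·γ_min·ρ_p + σ̂_p))^{1/(p−1)}·‖x̄ − x^k‖` for all `k`, and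
the factor is `< 1`. -/
theorem statement_18 (n : ℕ) (f : EuclideanSpace ℝ (Fin n) → EReal)
    (hproper : ∃ x, f x ≠ ⊤) (hbot : ∀ x, f x ≠ ⊥)
    (hlsc : LowerSemicontinuous f) (hcoer : Coercive f)
    (C : Set (EuclideanSpace ℝ (Fin n)))
    (hCclosed : IsClosed C) (hCconv : Convex ℝ C)
    (hdom : ∀ x ∈ C, f x ≠ ⊤)
    (φ : ℝ → EReal) (hφ : IsModulus φ)
    (hquasi : UnifQuasiconvexOn C φ f)
    (p : ℝ) (hp : 2 < p)
    (ρp : ℝ) (hρp : 0 < ρp)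
    (hlb : ∀ t : ℝ, 0 ≤ t → ((ρp * t ^ p : ℝ) : EReal) ≤ φ t)
    (γmin γmax : ℝ) (hγmin : 1 / ρp < γmin) (hγ : γmin < γmax)
    (x : ℕ → EuclideanSpace ℝ (Fin n)) (γ : ℕ → ℝ)
    (hx0 : x 0 ∈ C)
    (hγk : ∀ k, γ k ∈ Set.Ioo γmin γmax)
    (hstep : ∀ k, x (k + 1) ∈ HOProx f C p (γ k) (x k))
    (xb : EuclideanSpace ℝ (Fin n)) (hxbC : xb ∈ C)
    (hxbmin : ∀ y ∈ C, f xb ≤ f y)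
    (hxbuniq : ∀ z ∈ C, (∀ y ∈ C, f z ≤ f y) → z = xb) :
    ((p / (p * γmin * ρp + ((1 : ℝ) / 2) ^ ((3 * p - 2) / 2))) ^ (1 / (p - 1)) < 1) ∧
    ∀ k : ℕ, ‖xb - x (k + 1)‖
      ≤ (p / (p * γmin * ρp + ((1 : ℝ) / 2) ^ ((3 * p - 2) / 2))) ^ (1 / (p - 1))
          * ‖xb - x k‖ :=
  statement_18_general n f hbot C hCconv hdom φ hquasi p hp ρp hρp hlb γmin γmax hγmin x γ hx0 hγk
    hstep xb hxbC hxbmin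
end
end
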